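/- arXiv:2002.00586 — 2 statements merged into one kernel-verified Lean document; each statement's English description precedes it below -/
import Mathlib

section
/- (Lemma 3: either the power constraint or the energy constraint is tight at the optimum.) Consider the power control and time allocation problem PCP with N users: given constants W > 0, Pmax > 0 and, for each i ∈ {1,…,N}, D_i > 0, k_i > 0, B_i ≥ 0, C_i ≥ 0, the feasible set F consists of all pairs of vectors (τ, α) ∈ ℝ^N × ℝ^N with, for every i: τ_i > 0, α_i ≥ 0, W·τ_i·logb 2 (1 + k_i·α_i/τ_i) ≥ D_i, α_i ≤ τ_i·Pmax, and α_i ≤ B_i + C_i·Σ_{j=1}^{i} τ_j. Assume F contains a Slater point (a feasible point at which all inequality constraints of every user hold strictly). If (τ*, α*) ∈ F minimizes Σ_{i=1}^{N} τ_i over F, then for every i ∈ {1,…,N} at least one of the following holds: α*_i = τ*_i·Pmax, or α*_i = B_i + C_i·Σ_{j=1}^{i} τ*_j. -/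
/-!
Suppose user `i` has slack in both its power and its energy constraint at an optimum. Raising
`α i` slightly gives it slack in its rate and power constraints. A user `j` with rate and power
slack can give up a little time `η` and spend `C j * η` less energy; its own energy constraint
survives, and every later cumulative time drops by `η`. If no later energy constraint is tight
with `C m ≠ 0`, the total time drops. Otherwise the first such user `m` takes the time `η` into
its own slot: the total is unchanged, and since `t ↦ t * log (1 + c / t)` is increasing, `m` now
has rate and power slack. Downward induction on `j` ends this cascade.
-/

open Real Finset Filter Topology

theorem strictMonoOn_mul_log_one_add_div {c : ℝ} (hc : 0 < c) :
    StrictMonoOn (fun t => t * log (1 + c / t)) (Set.Ioi 0) := by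
  intro s (hs : 0 < s) t (ht : 0 < t) hst
  -- `1 + c / t` is the convex combination of `1 + c / s` and `1` with weights `s / t`, `(t - s) / t`
  have hconc := strictConcaveOn_log_Ioi.2 (x := 1 + c / s) (y := 1)
    (show 0 < 1 + c / s by positivity) (Set.mem_Ioi.2 one_pos) (by simp [hc.ne', hs.ne'])
    (div_pos hs ht) (div_pos (sub_pos.2 hst) ht) (by field_simp; ring)
  have hcomb : (s / t) • (1 + c / s) + ((t - s) / t) • (1 : ℝ) = 1 + c / t := by
    simp only [smul_eq_mul]; field_simp; ring
  rw [hcomb, smul_eq_mul, smul_eq_mul, log_one, mul_zero, add_zero] at hconc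
  show s * log (1 + c / s) < t * log (1 + c / t)
  calc s * log (1 + c / s) = t * (s / t * log (1 + c / s)) := by field_simp
    _ < t * log (1 + c / t) := mul_lt_mul_of_pos_left hconc ht

theorem Finset.sum_Iic_pi_single {ι M : Type*} [Preorder ι] [DecidableLE ι]
    [LocallyFiniteOrderBot ι] [DecidableEq ι] [AddCommMonoid M] (m l : ι) (c : M) :
    ∑ x ∈ Iic l, Pi.single m c x = if m ≤ l then c else 0 := by
  simp [sum_pi_single']

structure PCP (ι : Type*) where
  W : ℝ
  Pmax : ℝ
  D : ι → ℝ
  k : ι → ℝ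
  B : ι → ℝ
  C : ι → ℝ

namespace PCP

variable {ι : Type*} (P : PCP ι)

noncomputable def rate (i : ι) (t a : ℝ) : ℝ := P.W * t * logb 2 (1 + P.k i * a / t)

/-- `S` stands for the cumulative time `∑ j ≤ i, τ j` seen by the energy constraint of user `i`. -/
def UserFeasible (i : ι) (t a S : ℝ) : Prop :=
  0 < t ∧ 0 ≤ a ∧ P.D i ≤ P.rate i t a ∧ a ≤ t * P.Pmax ∧ a ≤ P.B i + P.C i * S

def RatePowerSlack (i : ι) (t a : ℝ) : Prop := P.D i < P.rate i t a ∧ a < t * P.Pmax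

variable {P} {i : ι} {t s a b S : ℝ}

@[simp] lemma rate_zero_right : P.rate i t 0 = 0 := by simp [rate]

lemma rate_lt_rate_right (hW : 0 < P.W) (hk : 0 < P.k i) (ht : 0 < t) (ha : 0 ≤ a)
    (hab : a < b) : P.rate i t a < P.rate i t b := by
  unfold rate
  gcongr
  exact one_lt_two

lemma rate_lt_rate_left (hW : 0 < P.W) (hk : 0 < P.k i) (ha : 0 < a) (ht : 0 < t)
    (hts : t < s) : P.rate i t a < P.rate i s a := by
  have := strictMonoOn_mul_log_one_add_div (mul_pos hk ha) ht (ht.trans hts) hts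
  simp only [rate, logb, mul_assoc, ← mul_div_assoc]
  gcongr

lemma continuousAt_rate_sub (hk : 0 < P.k i) (ht : 0 < t) (ha : 0 ≤ a) (c : ℝ) :
    ContinuousAt (fun η => P.rate i (t - η) (a - c * η)) 0 := by
  unfold rate logb
  fun_prop (disch := simp only [mul_zero, sub_zero]; positivity)

lemma UserFeasible.alloc_pos (hD : 0 < P.D i) (h : P.UserFeasible i t a S) : 0 < a := by
  obtain ⟨-, ha, hrate, -, -⟩ := h
  refine ha.lt_of_ne' fun ha₀ => ?_
  rw [ha₀, rate_zero_right] at hrate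
  exact hrate.not_gt hD

lemma UserFeasible.exists_slack (hW : 0 < P.W) (hk : 0 < P.k i) (h : P.UserFeasible i t a S)
    (hpow : a < t * P.Pmax) (hE : a < P.B i + P.C i * S) :
    ∃ b, P.UserFeasible i t b S ∧ P.RatePowerSlack i t b := by
  obtain ⟨ht, ha, hrate, -, -⟩ := h
  obtain ⟨hab, hb⟩ : a < (a + min (t * P.Pmax) (P.B i + P.C i * S)) / 2 ∧
      (a + min (t * P.Pmax) (P.B i + P.C i * S)) / 2 < min (t * P.Pmax) (P.B i + P.C i * S) := by
    constructor <;> linarith [lt_min hpow hE]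
  rw [lt_min_iff] at hb
  have hrate' := hrate.trans_lt (rate_lt_rate_right hW hk ht ha hab)
  exact ⟨_, ⟨ht, ha.trans hab.le, hrate'.le, hb.1.le, hb.2.le⟩, hrate', hb.1⟩

lemma UserFeasible.eventually_shrink (hD : 0 < P.D i) (hk : 0 < P.k i)
    (h : P.UserFeasible i t a S) (hs : P.RatePowerSlack i t a) :
    ∀ᶠ η in 𝓝 0, P.UserFeasible i (t - η) (a - P.C i * η) (S - η) := by
  have ha := h.alloc_pos hD
  obtain ⟨ht, -, -, -, hE⟩ := h
  obtain ⟨hrate, hpow⟩ := hs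
  have hcont := continuousAt_rate_sub hk ht ha.le (P.C i)
  have ht' : ∀ᶠ η in 𝓝 (0 : ℝ), 0 < t - η :=
    continuousAt_const.eventually_lt (by fun_prop) (by simpa using ht)
  have ha' : ∀ᶠ η in 𝓝 (0 : ℝ), 0 < a - P.C i * η :=
    continuousAt_const.eventually_lt (by fun_prop) (by simpa using ha)
  have hrate' : ∀ᶠ η in 𝓝 (0 : ℝ), P.D i < P.rate i (t - η) (a - P.C i * η) :=
    continuousAt_const.eventually_lt hcont (by simpa using hrate)
  have hpow' : ∀ᶠ η in 𝓝 (0 : ℝ), a - P.C i * η < (t - η) * P.Pmax :=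
    ContinuousAt.eventually_lt (by fun_prop) (by fun_prop) (by simpa using hpow)
  filter_upwards [ht', ha', hrate', hpow'] with η h₁ h₂ h₃ h₄
  exact ⟨h₁, h₂.le, h₃.le, h₄.le, by linarith⟩

lemma UserFeasible.eventually_sub_cumulative (h : P.UserFeasible i t a S)
    (hE : P.C i = 0 ∨ a < P.B i + P.C i * S) :
    ∀ᶠ η in 𝓝 0, P.UserFeasible i t a (S - η) := by
  obtain ⟨ht, ha, hrate, hpow, hE₀⟩ := h
  have hE' : ∀ᶠ η in 𝓝 (0 : ℝ), a ≤ P.B i + P.C i * (S - η) := by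
    rcases hE with hC | hE
    · exact .of_forall fun η => by simpa [hC] using hE₀
    · exact (continuousAt_const.eventually_lt (by fun_prop) (by simpa using hE)).mono
        fun _ => le_of_lt
  exact hE'.mono fun _ hη => ⟨ht, ha, hrate, hpow, hη⟩

lemma UserFeasible.add_time (hW : 0 < P.W) (hPmax : 0 < P.Pmax) (hD : 0 < P.D i)
    (hk : 0 < P.k i) (h : P.UserFeasible i t a S) {η : ℝ} (hη : 0 < η) :
    P.UserFeasible i (t + η) a S ∧ P.RatePowerSlack i (t + η) a := by
  have ha := h.alloc_pos hD
  obtain ⟨ht, ha₀, hrate, hpow, hE⟩ := h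
  have hrate' : P.D i < P.rate i (t + η) a :=
    hrate.trans_lt (rate_lt_rate_left hW hk ha ht (lt_add_of_pos_right t hη))
  have hpow' : a < (t + η) * P.Pmax := by nlinarith
  exact ⟨⟨by positivity, ha₀, hrate'.le, hpow'.le, hE⟩, hrate', hpow'⟩

section Schedule

variable [LinearOrder ι] [LocallyFiniteOrderBot ι]

def Feasible (τ α : ι → ℝ) : Prop :=
  ∀ i, P.UserFeasible i (τ i) (α i) (∑ j ∈ Iic i, τ j)

def EnergySlack (τ α : ι → ℝ) (i : ι) : Prop :=
  P.C i = 0 ∨ α i < P.B i + P.C i * ∑ j ∈ Iic i, τ j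

variable {τ α : ι → ℝ} {j m : ι}

lemma Feasible.exists_slack (hW : 0 < P.W) (hk : 0 < P.k j) (hf : P.Feasible τ α)
    (hpow : α j < τ j * P.Pmax) (hE : α j < P.B j + P.C j * ∑ x ∈ Iic j, τ x) :
    ∃ α', P.Feasible τ α' ∧ P.RatePowerSlack j (τ j) (α' j) := by
  obtain ⟨b, hb, hslack⟩ := (hf j).exists_slack hW hk hpow hE
  refine ⟨Function.update α j b, fun l => ?_, by simpa using hslack⟩
  rcases eq_or_ne l j with rfl | hl
  · simpa using hb
  · simpa [hl] using hf l

variable [Fintype ι]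

lemma Feasible.eventually_shrink (hD : ∀ i, 0 < P.D i) (hk : ∀ i, 0 < P.k i)
    (hf : P.Feasible τ α) (hs : P.RatePowerSlack j (τ j) (α j)) :
    ∀ᶠ η : ℝ in 𝓝 0, ∀ l, l ≤ j ∨ P.EnergySlack τ α l →
      P.UserFeasible l ((τ - Pi.single j η : ι → ℝ) l) ((α - Pi.single j (P.C j * η) : ι → ℝ) l)
        (∑ x ∈ Iic l, (τ - Pi.single j η : ι → ℝ) x) := by
  simp only [Pi.sub_apply, sum_sub_distrib, sum_Iic_pi_single]
  refine eventually_all.2 fun l => ?_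
  rcases lt_trichotomy l j with hlj | rfl | hjl
  · exact .of_forall fun η _ => by simpa [hlj.ne, not_le.2 hlj] using hf l
  · filter_upwards [(hf l).eventually_shrink (hD l) (hk l) hs] with η hη _
    simpa using hη
  · by_cases hl : P.EnergySlack τ α l
    · filter_upwards [(hf l).eventually_sub_cumulative hl] with η hη _
      simpa [hjl.ne', hjl.le] using hη
    · exact .of_forall fun η h => (hl (h.resolve_left (not_le.2 hjl))).elim

lemma Feasible.exists_sum_lt_of_energySlack (hD : ∀ i, 0 < P.D i) (hk : ∀ i, 0 < P.k i)
    (hf : P.Feasible τ α) (hs : P.RatePowerSlack j (τ j) (α j))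
    (hlater : ∀ l, j < l → P.EnergySlack τ α l) :
    ∃ τ' α', P.Feasible τ' α' ∧ ∑ i, τ' i < ∑ i, τ i := by
  obtain ⟨η, hη, hfη⟩ := (hf.eventually_shrink hD hk hs).exists_gt
  refine ⟨_, _, fun l => hfη l ((le_or_gt l j).imp_right (hlater l)), ?_⟩
  simpa [sum_sub_distrib] using hη

lemma Feasible.exists_transfer (hW : 0 < P.W) (hPmax : 0 < P.Pmax) (hD : ∀ i, 0 < P.D i)
    (hk : ∀ i, 0 < P.k i) (hf : P.Feasible τ α) (hs : P.RatePowerSlack j (τ j) (α j))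
    (hjm : j < m) (hm : ¬ P.EnergySlack τ α m)
    (hbetween : ∀ l, j < l → l < m → P.EnergySlack τ α l) :
    ∃ τ' α', P.Feasible τ' α' ∧ P.RatePowerSlack m (τ' m) (α' m) ∧ ∑ i, τ' i = ∑ i, τ i := by
  obtain ⟨η, hη, hfη⟩ := (hf.eventually_shrink hD hk hs).exists_gt
  have hm' := (hf m).add_time hW hPmax (hD m) (hk m) hη
  refine ⟨τ - Pi.single j η + Pi.single m η, α - Pi.single j (P.C j * η), fun l => ?_, ?_, ?_⟩
  · rcases lt_trichotomy l m with hlm | rfl | hml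
    · have := hfη l ((le_or_gt l j).imp_right fun hjl => hbetween l hjl hlm)
      simpa [sum_add_distrib, sum_Iic_pi_single, hlm.ne, not_le.2 hlm] using this
    · simpa [sum_add_distrib, sum_sub_distrib, sum_Iic_pi_single, hjm.ne', hjm.le] using hm'.1
    · simpa [sum_add_distrib, sum_sub_distrib, sum_Iic_pi_single, (hjm.trans hml).ne', hml.ne',
        hml.le, (hjm.trans hml).le] using hf l
  · simpa [hjm.ne'] using hm'.2
  · simp [sum_add_distrib, sum_sub_distrib]

theorem Feasible.exists_sum_lt (hW : 0 < P.W) (hPmax : 0 < P.Pmax) (hD : ∀ i, 0 < P.D i)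
    (hk : ∀ i, 0 < P.k i) (hf : P.Feasible τ α) (hs : P.RatePowerSlack j (τ j) (α j)) :
    ∃ τ' α', P.Feasible τ' α' ∧ ∑ i, τ' i < ∑ i, τ i := by
  induction j using WellFoundedGT.induction generalizing τ α with
  | _ j ih =>
  by_cases hlater : ∀ l, j < l → P.EnergySlack τ α l
  · exact hf.exists_sum_lt_of_energySlack hD hk hs hlater
  push Not at hlater
  obtain ⟨m, ⟨hjm, hm⟩, hmin⟩ :=
    wellFounded_lt.has_min {l | j < l ∧ ¬ P.EnergySlack τ α l} hlater
  obtain ⟨τ', α', hf', hs', hsum⟩ := hf.exists_transfer hW hPmax hD hk hs hjm hm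
    fun l hjl hlm => by_contra fun hl => hmin l ⟨hjl, hl⟩ hlm
  obtain ⟨τ'', α'', hf'', hlt⟩ := ih m hjm hf' hs'
  exact ⟨τ'', α'', hf'', hsum ▸ hlt⟩

end Schedule

end PCP

theorem power_or_energy_constraint_tight_at_optimum_general (N : ℕ) (W Pmax : ℝ)
    (hW : 0 < W) (hPmax : 0 < Pmax)
    (D k B C : Fin N → ℝ)
    (hD : ∀ i, 0 < D i) (hk : ∀ i, 0 < k i)
    (F : Set ((Fin N → ℝ) × (Fin N → ℝ)))
    (hF : F = {p | ∀ i : Fin N,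
        0 < p.1 i ∧ 0 ≤ p.2 i ∧
        D i ≤ W * p.1 i * Real.logb 2 (1 + k i * p.2 i / p.1 i) ∧
        p.2 i ≤ p.1 i * Pmax ∧
        p.2 i ≤ B i + C i * ∑ j ∈ Finset.Iic i, p.1 j})
    (τs αs : Fin N → ℝ) (hmem : (τs, αs) ∈ F)
    (hopt : ∀ p ∈ F, ∑ i, τs i ≤ ∑ i, p.1 i) :
    ∀ i : Fin N,
      αs i = τs i * Pmax ∨ αs i = B i + C i * ∑ j ∈ Finset.Iic i, τs j := by
  let P : PCP (Fin N) := ⟨W, Pmax, D, k, B, C⟩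
  have hF' (τ α : Fin N → ℝ) : (τ, α) ∈ F ↔ P.Feasible τ α := by subst hF; rfl
  intro i
  by_contra! h
  have hf := (hF' τs αs).1 hmem
  obtain ⟨-, -, -, hpow, hE⟩ := hf i
  obtain ⟨α', hf', hs⟩ := hf.exists_slack hW (hk i) (hpow.lt_of_ne h.1) (hE.lt_of_ne h.2)
  obtain ⟨τ'', α'', hf'', hlt⟩ := hf'.exists_sum_lt hW hPmax hD hk hs
  exact (hopt (τ'', α'') ((hF' τ'' α'').2 hf'')).not_gt hlt

/-- Lemma 3 (either the power constraint or the energy constraint is tight at the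
optimum): in the power control and time allocation problem `PCP`, assuming the
feasible set contains a Slater point, any minimizer of the schedule length
satisfies, for each user, the maximum power constraint or the energy causality
constraint with equality. -/
theorem power_or_energy_constraint_tight_at_optimum (N : ℕ) (W Pmax : ℝ)
    (hW : 0 < W) (hPmax : 0 < Pmax)
    (D k B C : Fin N → ℝ)
    (hD : ∀ i, 0 < D i) (hk : ∀ i, 0 < k i) (hB : ∀ i, 0 ≤ B i) (hC : ∀ i, 0 ≤ C i)
    (F : Set ((Fin N → ℝ) × (Fin N → ℝ)))
    (hF : F = {p | ∀ i : Fin N,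
        0 < p.1 i ∧ 0 ≤ p.2 i ∧
        D i ≤ W * p.1 i * Real.logb 2 (1 + k i * p.2 i / p.1 i) ∧
        p.2 i ≤ p.1 i * Pmax ∧
        p.2 i ≤ B i + C i * ∑ j ∈ Finset.Iic i, p.1 j})
    (hSlater : ∃ p ∈ F, ∀ i : Fin N,
        D i < W * p.1 i * Real.logb 2 (1 + k i * p.2 i / p.1 i) ∧
        p.2 i < p.1 i * Pmax ∧
        p.2 i < B i + C i * ∑ j ∈ Finset.Iic i, p.1 j)
    (τs αs : Fin N → ℝ) (hmem : (τs, αs) ∈ F)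
    (hopt : ∀ p ∈ F, ∑ i, τs i ≤ ∑ i, p.1 i) :
    ∀ i : Fin N,
      αs i = τs i * Pmax ∨ αs i = B i + C i * ∑ j ∈ Finset.Iic i, τs j :=
  power_or_energy_constraint_tight_at_optimum_general N W Pmax hW hPmax D k B C hD hk F hF τs αs
    hmem hopt
end

section
/- (P* is the maximum transmit power satisfying energy causality.) Let W > 0, k > 0, D > 0, ε > 0, C ≥ 0, and define τ(P) = D/(W·logb 2 (1 + k·P)) for P > 0. Suppose P* > 0 satisfies P*·τ(P*) = ε + C·τ(P*). Then for every P > 0: the energy causality condition P·τ(P) ≤ ε + C·τ(P) holds if and only if P ≤ P*. -/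
/-!
Write `τ(P) = D / (W·logb 2 (1 + kP))`. The causality condition is `(P - C)·τ(P) ≤ ε`, and `P*`
is where equality holds, so it suffices that `P ↦ (P - C)·τ(P)` is strictly increasing on
`(0, ∞)`. Split it as `(D/W)·P / logb 2 (1 + kP)` minus `C·τ(P)`: the first term is strictly
increasing because `log (1 + x) / x`, the slope of a secant of the concave `log` through `1`,
is strictly decreasing, and the second is nonincreasing since `τ` is.
-/

open Real Set

noncomputable def transmissionTime (W k D P : ℝ) : ℝ := D / (W * logb 2 (1 + k * P))

lemma strictAntiOn_log_one_add_div : StrictAntiOn (fun x : ℝ => log (1 + x) / x) (Ioi 0) := by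
  intro x (hx : 0 < x) y (hy : 0 < y) hxy
  have hsecant := strictConcaveOn_log_Ioi.secant_strict_mono (a := 1) (x := 1 + x) (y := 1 + y)
    (mem_Ioi.2 one_pos) (mem_Ioi.2 (by linarith)) (mem_Ioi.2 (by linarith))
    (by linarith) (by linarith) (by linarith)
  simpa only [log_one, sub_zero, add_sub_cancel_left] using hsecant

section LogbOneAddMul

variable {b k : ℝ}

lemma strictMonoOn_div_logb_one_add_mul (hb : 1 < b) (hk : 0 < k) :
    StrictMonoOn (fun P => P / logb b (1 + k * P)) (Ioi 0) := by
  intro P (hP : 0 < P) Q (hQ : 0 < Q) hPQ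
  have hslope : log (1 + k * Q) / (k * Q) < log (1 + k * P) / (k * P) :=
    strictAntiOn_log_one_add_div (mul_pos hk hP) (mul_pos hk hQ) (by gcongr)
  have hlogP : 0 < log (1 + k * P) := log_pos (by nlinarith)
  have hlogQ : 0 < log (1 + k * Q) := log_pos (by nlinarith)
  have hlogb : 0 < log b := log_pos hb
  simp only [logb]
  rw [div_div_eq_mul_div, div_div_eq_mul_div, div_lt_div_iff₀ hlogP hlogQ]
  rw [div_lt_div_iff₀ (by positivity) (by positivity)] at hslope
  nlinarith

lemma antitoneOn_div_logb_one_add_mul (hb : 1 < b) (hk : 0 < k) {c : ℝ} (hc : 0 ≤ c) :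
    AntitoneOn (fun P => c / logb b (1 + k * P)) (Ioi 0) := by
  intro P (hP : 0 < P) Q _ hPQ
  have hlogbP : 0 < logb b (1 + k * P) := logb_pos hb (by nlinarith)
  have hlogb_le : logb b (1 + k * P) ≤ logb b (1 + k * Q) :=
    logb_le_logb_of_le hb (by nlinarith) (by nlinarith)
  exact div_le_div_of_nonneg_left hc hlogbP hlogb_le

end LogbOneAddMul

lemma strictMonoOn_sub_mul_transmissionTime {W k D C : ℝ} (hW : 0 < W) (hk : 0 < k) (hD : 0 < D)
    (hC : 0 ≤ C) : StrictMonoOn (fun P => (P - C) * transmissionTime W k D P) (Ioi 0) := by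
  have hdecomp : (fun P => (P - C) * transmissionTime W k D P) =
      fun P => D / W * (P / logb 2 (1 + k * P)) + -(C * D / W / logb 2 (1 + k * P)) := by
    funext P
    simp only [transmissionTime]
    ring
  rw [hdecomp]
  refine StrictMonoOn.add_monotone ?_ ?_
  · exact fun P hP Q hQ hPQ => mul_lt_mul_of_pos_left
      (strictMonoOn_div_logb_one_add_mul one_lt_two hk hP hQ hPQ) (div_pos hD hW)
  · exact (antitoneOn_div_logb_one_add_mul one_lt_two hk (by positivity)).neg

theorem energy_causality_iff_le_Pstar_general (W k D ε C Pstar : ℝ)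
    (hW : 0 < W) (hk : 0 < k) (hD : 0 < D) (hC : 0 ≤ C)
    (hPstar : 0 < Pstar)
    (heq : Pstar * (D / (W * Real.logb 2 (1 + k * Pstar)))
        = ε + C * (D / (W * Real.logb 2 (1 + k * Pstar)))) :
    ∀ P : ℝ, 0 < P →
      (P * (D / (W * Real.logb 2 (1 + k * P)))
          ≤ ε + C * (D / (W * Real.logb 2 (1 + k * P))) ↔ P ≤ Pstar) := by
  intro P hP
  have hεeq : (Pstar - C) * transmissionTime W k D Pstar = ε := by
    rw [sub_mul]
    exact sub_eq_of_eq_add heq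
  change P * transmissionTime W k D P ≤ ε + C * transmissionTime W k D P ↔ P ≤ Pstar
  rw [← sub_le_iff_le_add, ← sub_mul, ← hεeq]
  exact (strictMonoOn_sub_mul_transmissionTime hW hk hD hC).le_iff_le hP hPstar

/-- `P*` is the maximum transmit power satisfying energy causality: if
`P*·τ(P*) = ε + C·τ(P*)` where `τ(P) = D/(W·logb 2 (1 + k·P))`, then for every
`P > 0` the energy causality condition `P·τ(P) ≤ ε + C·τ(P)` holds iff `P ≤ P*`. -/
theorem energy_causality_iff_le_Pstar (W k D ε C Pstar : ℝ)
    (hW : 0 < W) (hk : 0 < k) (hD : 0 < D) (hε : 0 < ε) (hC : 0 ≤ C)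
    (hPstar : 0 < Pstar)
    (heq : Pstar * (D / (W * Real.logb 2 (1 + k * Pstar)))
        = ε + C * (D / (W * Real.logb 2 (1 + k * Pstar)))) :
    ∀ P : ℝ, 0 < P →
      (P * (D / (W * Real.logb 2 (1 + k * P)))
          ≤ ε + C * (D / (W * Real.logb 2 (1 + k * P))) ↔ P ≤ Pstar) :=
  energy_causality_iff_le_Pstar_general W k D ε C Pstar hW hk hD hC hPstar heq
end
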